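/- arXiv:1711.04874 — 3 statements merged into one kernel-verified Lean document; each statement's English description precedes it below -/
import Mathlib

section
/- Uniqueness of the constrained observability Gramian: let A ∈ ℝ^{d×d} and v ∈ ℝ^d, v ≠ 0, and suppose the matrix exponential exp(t·A) converges as t → ∞ to a limit E ∈ ℝ^{d×d} whose range is contained in the span of v. Let Q ∈ ℝ^{d×d} and suppose P₁, P₂ ∈ ℝ^{d×d} are symmetric matrices each satisfying Pᵢ·A + Aᵀ·Pᵢ + Q = 0 and Pᵢ·v = 0. Then P₁ = P₂. -/
/-!
The difference `D = P₁ - P₂` solves the homogeneous equation `D A + Aᵀ D = 0`, which says that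
`D` intertwines `A` with `-Aᵀ`; hence `exp (t A)ᵀ * D * exp (t A) = D` for every `t`. Letting
`t → ∞` gives `D = Eᵀ D E`, and `D E = 0` because the range of `E` lies in the span of `v`,
which `D` annihilates.
-/

open Matrix Filter Topology

namespace Matrix

variable {m : Type*} [Fintype m]

theorem mul_eq_zero_of_range_le_span {R : Type*} [CommSemiring R] {D E : Matrix m m R}
    {v : m → R} (hDv : D *ᵥ v = 0) (hE : ∀ x, ∃ c : R, E *ᵥ x = c • v) : D * E = 0 := by
  refine ext_iff_mulVec.mpr fun x => ?_
  obtain ⟨c, hc⟩ := hE x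
  rw [← mulVec_mulVec, hc, mulVec_smul, hDv, smul_zero, zero_mulVec]

variable [DecidableEq m]

theorem exp_neg_mul_mul_exp_eq_self_of_semiconjBy
    {X A B : Matrix m m ℝ} (h : SemiconjBy X A B) :
    NormedSpace.exp (-B) * X * NormedSpace.exp A = X :=
  letI : NormedRing (Matrix m m ℝ) := Matrix.linftyOpNormedRing
  letI : NormedAlgebra ℝ (Matrix m m ℝ) := Matrix.linftyOpNormedAlgebra
  letI : NormedAlgebra ℚ (Matrix m m ℝ) := Matrix.linftyOpNormedAlgebra
  haveI : CompleteSpace (Matrix m m ℝ) := FiniteDimensional.complete ℝ _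
  h.exp_neg_mul_mul_exp_eq_self

theorem transpose_exp_mul_mul_exp_eq_self {A D : Matrix m m ℝ} (hD : D * A + Aᵀ * D = 0)
    (t : ℝ) : (NormedSpace.exp (t • A))ᵀ * D * NormedSpace.exp (t • A) = D := by
  have hsemiconj : SemiconjBy D (t • A) (-(t • Aᵀ)) := by
    rw [SemiconjBy, mul_smul_comm, neg_mul, smul_mul_assoc, eq_neg_iff_add_eq_zero,
      ← smul_add, hD, smul_zero]
  rw [← exp_transpose, transpose_smul]
  simpa only [neg_neg] using exp_neg_mul_mul_exp_eq_self_of_semiconjBy hsemiconj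

theorem transpose_mul_mul_eq_self_of_tendsto_exp {A D E : Matrix m m ℝ}
    (hD : D * A + Aᵀ * D = 0)
    (hE : Tendsto (fun t : ℝ => NormedSpace.exp (t • A)) atTop (𝓝 E)) :
    Eᵀ * D * E = D := by
  have hlim : Tendsto (fun t : ℝ => (NormedSpace.exp (t • A))ᵀ * D * NormedSpace.exp (t • A))
      atTop (𝓝 (Eᵀ * D * E)) :=
    (((continuous_id.matrix_transpose.tendsto E).comp hE).mul tendsto_const_nhds).mul hE
  simp only [transpose_exp_mul_mul_exp_eq_self hD] at hlim
  exact tendsto_nhds_unique hlim tendsto_const_nhds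

theorem eq_zero_of_lyapunov_of_mulVec_eq_zero {A D E : Matrix m m ℝ} {v : m → ℝ}
    (hD : D * A + Aᵀ * D = 0)
    (hE : Tendsto (fun t : ℝ => NormedSpace.exp (t • A)) atTop (𝓝 E))
    (hrange : ∀ x, ∃ c : ℝ, E *ᵥ x = c • v) (hDv : D *ᵥ v = 0) : D = 0 := by
  rw [← transpose_mul_mul_eq_self_of_tendsto_exp hD hE, mul_assoc,
    mul_eq_zero_of_range_le_span hDv hrange, mul_zero]

end Matrix

theorem constrained_gramian_unique_general {d : ℕ}
    (A : Matrix (Fin d) (Fin d) ℝ) (v : Fin d → ℝ)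
    (E : Matrix (Fin d) (Fin d) ℝ)
    (hE : Tendsto (fun t : ℝ => NormedSpace.exp (t • A)) atTop (nhds E))
    (hrange : ∀ x : Fin d → ℝ, ∃ c : ℝ, E.mulVec x = c • v)
    (Q : Matrix (Fin d) (Fin d) ℝ)
    (P₁ P₂ : Matrix (Fin d) (Fin d) ℝ)
    (hP₁ : P₁ * A + Aᵀ * P₁ + Q = 0) (hP₂ : P₂ * A + Aᵀ * P₂ + Q = 0)
    (hP₁v : P₁.mulVec v = 0) (hP₂v : P₂.mulVec v = 0) :
    P₁ = P₂ := by
  have hD : (P₁ - P₂) * A + Aᵀ * (P₁ - P₂) = 0 := by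
    rw [sub_mul, mul_sub, ← sub_eq_zero.mpr (hP₁.trans hP₂.symm)]
    abel
  have hDv : (P₁ - P₂) *ᵥ v = 0 := by rw [sub_mulVec, hP₁v, hP₂v, sub_zero]
  exact sub_eq_zero.mp (eq_zero_of_lyapunov_of_mulVec_eq_zero hD hE hrange hDv)

/-- **Uniqueness of the constrained observability Gramian** (Lemma 1, uniqueness part):
if `exp(tA)` converges as `t → ∞` to a matrix `E` whose range is contained in the span of a
nonzero vector `v`, then a symmetric solution of the Lyapunov equation
`P A + Aᵀ P + Q = 0` satisfying the additional constraint `P v = 0` is unique. -/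
theorem constrained_gramian_unique {d : ℕ}
    (A : Matrix (Fin d) (Fin d) ℝ) (v : Fin d → ℝ) (hv : v ≠ 0)
    (E : Matrix (Fin d) (Fin d) ℝ)
    (hE : Tendsto (fun t : ℝ => NormedSpace.exp (t • A)) atTop (nhds E))
    (hrange : ∀ x : Fin d → ℝ, ∃ c : ℝ, E.mulVec x = c • v)
    (Q : Matrix (Fin d) (Fin d) ℝ)
    (P₁ P₂ : Matrix (Fin d) (Fin d) ℝ)
    (hP₁symm : P₁.IsSymm) (hP₂symm : P₂.IsSymm)
    (hP₁ : P₁ * A + Aᵀ * P₁ + Q = 0) (hP₂ : P₂ * A + Aᵀ * P₂ + Q = 0)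
    (hP₁v : P₁.mulVec v = 0) (hP₂v : P₂.mulVec v = 0) :
    P₁ = P₂ :=
  constrained_gramian_unique_general A v E hE hrange Q P₁ P₂ hP₁ hP₂ hP₁v hP₂v
end

section
/- Explicit observability Gramian of the network-reduced swing dynamics: let m, d ∈ ℝⁿ with mᵢ > 0 and dᵢ > 0, set M = diag(m), D = diag(d), let L ∈ ℝ^{n×n} be symmetric with L·𝟙 = 0, and form A = [[0, I], [−M⁻¹L, −M⁻¹D]] ∈ ℝ^{2n×2n} and Q = blkdiag(0, D). Then the symmetric matrix P = (1/2)·blkdiag(L, M) satisfies P·A + Aᵀ·P + Q = 0 and P·[𝟙; 0] = 0. Moreover, for any π ∈ ℝⁿ with πᵢ ≥ 0, Π = diag(π), and B = [0; M⁻¹ Π^{1/2}] ∈ ℝ^{2n×n}, one has trace(Bᵀ P B) = (1/2) Σᵢ πᵢ/mᵢ. -/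
open Matrix

/-- State matrix `A = [[0, I], [−M⁻¹L, −M⁻¹D]]` of the network-reduced swing dynamics. -/
noncomputable def swingA {n : ℕ} (m d : Fin n → ℝ) (L : Matrix (Fin n) (Fin n) ℝ) :
    Matrix (Fin n ⊕ Fin n) (Fin n ⊕ Fin n) ℝ :=
  Matrix.fromBlocks 0 1 (-(Matrix.diagonal (fun i => (m i)⁻¹) * L))
    (-(Matrix.diagonal (fun i => (m i)⁻¹) * Matrix.diagonal d))

/-- Input matrix `B = [0; M⁻¹ Π^{1/2}]`. -/
noncomputable def swingB {n : ℕ} (m π : Fin n → ℝ) : Matrix (Fin n ⊕ Fin n) (Fin n) ℝ :=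
  Matrix.fromRows 0
    (Matrix.diagonal (fun i => (m i)⁻¹) * Matrix.diagonal (fun i => Real.sqrt (π i)))

/-- Output weight `Q = CᵀC = blkdiag(0, D)` for the primary-control-effort output
`y = D^{1/2} ω`. -/
def swingQ {n : ℕ} (d : Fin n → ℝ) : Matrix (Fin n ⊕ Fin n) (Fin n ⊕ Fin n) ℝ :=
  Matrix.fromBlocks 0 0 0 (Matrix.diagonal d)

/-- Candidate observability Gramian `P = (1/2)·blkdiag(L, M)`. -/
noncomputable def swingP {n : ℕ} (m : Fin n → ℝ) (L : Matrix (Fin n) (Fin n) ℝ) :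
    Matrix (Fin n ⊕ Fin n) (Fin n ⊕ Fin n) ℝ :=
  ((1 : ℝ) / 2) • Matrix.fromBlocks L 0 0 (Matrix.diagonal m)

/-!
`P` is half the energy matrix of the mechanical system `M θ̈ + D θ̇ + L θ = 0`: the energy
`½ (θᵀ L θ + ωᵀ M ω)` decays along trajectories at rate `ωᵀ D ω`, which is exactly the Lyapunov
equation `P A + Aᵀ P = -Q`. The kernel vector of `P` comes from `L 𝟙 = 0`, and since `B` only
enters the velocity block, `Bᵀ P B = ½ Π^{1/2} M⁻¹ Π^{1/2}`.
-/

section SecondOrderSystem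

variable {ι R : Type*} [Fintype ι]

theorem fromBlocks_lyapunov_secondOrder [DecidableEq ι] [CommRing R] {K M Minv D : Matrix ι ι R}
    (hK : K.IsSymm) (hM : M.IsSymm) (hMinv : M * Minv = 1) :
    fromBlocks K 0 0 M * fromBlocks 0 1 (-(Minv * K)) (-(Minv * D)) +
        (fromBlocks 0 1 (-(Minv * K)) (-(Minv * D)))ᵀ * fromBlocks K 0 0 M =
      fromBlocks 0 0 0 (-(D + Dᵀ)) := by
  have hMinvT : Minvᵀ * M = 1 := by
    rw [← hM.eq, ← transpose_mul, hMinv, transpose_one]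
  rw [fromBlocks_transpose, fromBlocks_multiply, fromBlocks_multiply, fromBlocks_add]
  simp only [transpose_neg, transpose_mul, transpose_one, transpose_zero, hK.eq,
    Matrix.mul_neg, Matrix.neg_mul, Matrix.mul_assoc, ← Matrix.mul_assoc M, hMinv, hMinvT,
    Matrix.mul_zero, Matrix.zero_mul, Matrix.mul_one, Matrix.one_mul, add_zero, zero_add]
  congr 1 <;> abel

variable [Semiring R]

theorem fromBlocks_mulVec_elim_zero_of_mulVec_eq_zero {K M : Matrix ι ι R} {v : ι → R}
    (hv : K *ᵥ v = 0) : fromBlocks K 0 0 M *ᵥ Sum.elim v (fun _ => 0) = 0 := by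
  rw [fromBlocks_mulVec]
  simp [hv, ← Pi.zero_def]

theorem transpose_fromRows_mul_fromBlocks_mul_fromRows {κ : Type*} (K M : Matrix ι ι R)
    (F G : Matrix ι κ R) :
    (fromRows F G)ᵀ * fromBlocks K 0 0 M * fromRows F G = Fᵀ * K * F + Gᵀ * M * G := by
  simp [transpose_fromRows, fromCols_mul_fromBlocks, fromCols_mul_fromRows]

end SecondOrderSystem

theorem swing_gramian_explicit_general {n : ℕ}
    (m d : Fin n → ℝ) (hm : ∀ i, 0 < m i)
    (L : Matrix (Fin n) (Fin n) ℝ) (hLsymm : L.IsSymm)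
    (hL1 : L.mulVec (fun _ => (1 : ℝ)) = 0)
    (π : Fin n → ℝ) (hπ : ∀ i, 0 ≤ π i) :
    swingP m L * swingA m d L + (swingA m d L)ᵀ * swingP m L + swingQ d = 0 ∧
    (swingP m L).mulVec (Sum.elim (fun _ => (1 : ℝ)) (fun _ => (0 : ℝ))) = 0 ∧
    Matrix.trace ((swingB m π)ᵀ * swingP m L * swingB m π) =
      (1 / 2) * ∑ i, π i / m i := by
  have hMinv : diagonal m * diagonal (fun i => (m i)⁻¹) = 1 := by
    rw [diagonal_mul_diagonal, ← diagonal_one]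
    exact congrArg diagonal (funext fun i => mul_inv_cancel₀ (hm i).ne')
  refine ⟨?_, ?_, ?_⟩
  · rw [swingP, swingQ, smul_mul_assoc, mul_smul_comm, ← smul_add, swingA,
      fromBlocks_lyapunov_secondOrder hLsymm (diagonal_transpose m) hMinv, diagonal_transpose,
      ← two_smul ℝ, fromBlocks_smul, fromBlocks_add]
    simp [smul_smul]
  · rw [swingP, smul_mulVec, fromBlocks_mulVec_elim_zero_of_mulVec_eq_zero hL1, smul_zero]
  · rw [swingB, swingP, Matrix.mul_smul, Matrix.smul_mul, trace_smul,
      transpose_fromRows_mul_fromBlocks_mul_fromRows]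
    simp only [transpose_zero, Matrix.zero_mul, zero_add, diagonal_transpose,
      diagonal_mul_diagonal, trace_diagonal, smul_eq_mul]
    congr 1
    refine Finset.sum_congr rfl fun i _ => ?_
    have hmi : m i ≠ 0 := (hm i).ne'
    field_simp
    exact Real.sq_sqrt (hπ i)

/-- **Explicit observability Gramian of the network-reduced swing dynamics**:
`P = (1/2) blkdiag(L, M)` solves `P A + Aᵀ P + Q = 0` with `P [𝟙; 0] = 0`, and
`trace(Bᵀ P B) = (1/2) Σᵢ πᵢ/mᵢ`. -/
theorem swing_gramian_explicit {n : ℕ}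
    (m d : Fin n → ℝ) (hm : ∀ i, 0 < m i) (hd : ∀ i, 0 < d i)
    (L : Matrix (Fin n) (Fin n) ℝ) (hLsymm : L.IsSymm)
    (hL1 : L.mulVec (fun _ => (1 : ℝ)) = 0)
    (π : Fin n → ℝ) (hπ : ∀ i, 0 ≤ π i) :
    swingP m L * swingA m d L + (swingA m d L)ᵀ * swingP m L + swingQ d = 0 ∧
    (swingP m L).mulVec (Sum.elim (fun _ => (1 : ℝ)) (fun _ => (0 : ℝ))) = 0 ∧
    Matrix.trace ((swingB m π)ᵀ * swingP m L * swingB m π) =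
      (1 / 2) * ∑ i, π i / m i :=
  swing_gramian_explicit_general m d hm L hLsymm hL1 π hπ
end

section
/- Convex upper bound for generic performance metrics (Remark 1): let m, d, π ∈ ℝⁿ with mᵢ > 0, dᵢ > 0 and πᵢ ≥ 0, set M = diag(m), D = diag(d), Π = diag(π), and let L ∈ ℝ^{n×n} be symmetric positive semidefinite with kernel exactly the span of 𝟙. Let Q₁ ∈ ℝ^{n×n} be symmetric positive semidefinite with Q₁·𝟙 = 0 and let q₂ ∈ ℝⁿ with (q₂)ᵢ ≥ 0, and let C be any matrix with CᵀC = blkdiag(Q₁, diag(q₂)). With A = [[0, I], [−M⁻¹L, −M⁻¹D]] and B = [0; M⁻¹Π^{1/2}], for every T ≥ 0 one has ∫₀^T ‖C · exp(t·A) · B‖_F² dt ≤ (maxᵢ πᵢ) · (1/(2 minᵢ dᵢ)) · ( trace(L⁺ Q₁) + Σᵢ (q₂)ᵢ/mᵢ ); in particular the improper integral converges and obeys the same bound, which is convex in the inertia vector m. -/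
open Matrix MeasureTheory Filter Topology

/-- `Lp` is the Moore–Penrose pseudoinverse of `L` (the four Penrose conditions, which
determine it uniquely). -/
def IsMoorePenroseInv {n : ℕ} (L Lp : Matrix (Fin n) (Fin n) ℝ) : Prop :=
  L * Lp * L = L ∧ Lp * L * Lp = Lp ∧ (L * Lp)ᵀ = L * Lp ∧ (Lp * L)ᵀ = Lp * L

/-!
Let `P = ∫₀ᵀ exp(tA)ᵀ Q exp(tA) dt` be the finite-horizon Gramian of `Q = CᵀC`. The energy equals
`tr(BᵀPB) = Σⱼ πⱼ Pⱼⱼ⁽²²⁾ / mⱼ²`, and `P` solves the Lyapunov equation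
`AᵀP + PA = exp(TA)ᵀ Q exp(TA) - Q`, whose right-hand side is `⪰ -Q`. Its `(2,2)` diagonal gives
`(dⱼ/mⱼ) Pⱼⱼ⁽²²⁾ ≤ Pⱼⱼ⁽²¹⁾ + (q₂)ⱼ/2`, and its `(1,1)` block reads `LY + YᵀL ⪯ Q₁` with
`Y = M⁻¹P⁽²¹⁾`. Since `P` kills the rigid rotation `(𝟙, 0)`, the rows of `Y` sum to zero, so
multiplying by `L⁺` and taking traces gives `2 tr Y ≤ tr(L⁺Q₁)`. Comparing `πⱼ` with `dⱼ` through
`maxᵢ πᵢ / minᵢ dᵢ` finishes the bound, which, the integrand being nonnegative, also controls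
the limit `T → ∞`.
-/

open Matrix

theorem Matrix.PosSemidef.trace_mul_nonneg {ι : Type*} [Fintype ι]
    {A B : Matrix ι ι ℝ} (hA : A.PosSemidef) (hB : B.PosSemidef) : 0 ≤ (A * B).trace := by
  classical
  open scoped MatrixOrder in
  obtain ⟨S, rfl⟩ := CStarAlgebra.nonneg_iff_eq_star_mul_self.mp hB.nonneg
  rw [star_eq_conjTranspose, ← Matrix.mul_assoc, trace_mul_cycle]
  exact (hA.mul_mul_conjTranspose_same S).trace_nonneg

theorem Matrix.mul_eq_zero_of_ker_le_const {ι κ μ ν R : Type*} [Fintype ι] [CommRing R]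
    {L : Matrix κ ι R} (hker : ∀ x : ι → R, L *ᵥ x = 0 → ∃ c : R, x = fun _ => c)
    {K : Matrix ι ν R} (hK : L * K = 0) {Y : Matrix μ ι R} (hY : Y *ᵥ (fun _ => 1) = 0) :
    Y * K = 0 := by
  ext i j
  obtain ⟨c, hc⟩ := hker (fun k => K k j) <| funext fun l => by
    simpa [Matrix.mul_apply, mulVec, dotProduct] using congrFun (congrFun hK l) j
  have hrow : ∑ k, Y i k = 0 := by simpa [mulVec, dotProduct] using congrFun hY i
  simp [Matrix.mul_apply, fun k => congrFun hc k, ← Finset.sum_mul, hrow]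

theorem trace_transpose_fromRows_zero_diagonal_mul_mul {ι : Type*} [Fintype ι] [DecidableEq ι]
    (b : ι → ℝ) (P : Matrix (ι ⊕ ι) (ι ⊕ ι) ℝ) :
    trace ((fromRows (0 : Matrix ι ι ℝ) (diagonal b))ᵀ * P *
        fromRows (0 : Matrix ι ι ℝ) (diagonal b)) = ∑ j, b j ^ 2 * P (.inr j) (.inr j) := by
  simp only [trace, diag_apply, Matrix.mul_apply, transpose_apply, Fintype.sum_sum_type,
    fromRows_apply_inl, Matrix.zero_apply, zero_mul, Finset.sum_const_zero, fromRows_apply_inr,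
    diagonal_apply, ite_mul, Finset.sum_ite_eq', Finset.mem_univ, ↓reduceIte, zero_add, mul_zero,
    mul_ite]
  exact Finset.sum_congr rfl fun j _ => by ring

namespace IsMoorePenroseInv

variable {n : ℕ} {L Lp : Matrix (Fin n) (Fin n) ℝ}

theorem transpose (h : IsMoorePenroseInv L Lp) : IsMoorePenroseInv Lᵀ Lpᵀ := by
  obtain ⟨h1, h2, h3, h4⟩ := h
  refine ⟨?_, ?_, ?_, ?_⟩
  · rw [← transpose_mul, ← transpose_mul, ← Matrix.mul_assoc, h1]
  · rw [← transpose_mul, ← transpose_mul, ← Matrix.mul_assoc, h2]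
  · rw [← transpose_mul, h4, h4]
  · rw [← transpose_mul, h3, h3]

theorem unique {X Y : Matrix (Fin n) (Fin n) ℝ} (hX : IsMoorePenroseInv L X)
    (hY : IsMoorePenroseInv L Y) : X = Y := by
  obtain ⟨hX1, hX2, hX3, hX4⟩ := hX
  obtain ⟨hY1, hY2, hY3, hY4⟩ := hY
  calc X = X * L * X := hX2.symm
    _ = X * (L * Y * L * X)ᵀ := by rw [hY1, Matrix.mul_assoc, hX3]
    _ = X * (L * X)ᵀ * (L * Y)ᵀ := by simp only [transpose_mul, Matrix.mul_assoc]
    _ = X * L * Y := by rw [hX3, hY3]; simp only [← Matrix.mul_assoc, hX2]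
    _ = (X * L)ᵀ * (Y * L)ᵀ * Y := by
      rw [hX4, hY4]; simp only [Matrix.mul_assoc]; rw [← Matrix.mul_assoc Y L Y, hY2]
    _ = (Y * (L * X * L))ᵀ * Y := by simp only [transpose_mul, Matrix.mul_assoc]
    _ = Y := by rw [hX1, hY4, hY2]

theorem transpose_eq (h : IsMoorePenroseInv L Lp) (hL : Lᵀ = L) : Lpᵀ = Lp :=
  (hL ▸ h.transpose).unique h

theorem posSemidef (h : IsMoorePenroseInv L Lp) (hL : L.PosSemidef) : Lp.PosSemidef := by
  have hsymm : Lpᵀ = Lp := h.transpose_eq (isHermitian_iff_isSymm.1 hL.isHermitian).eq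
  refine .of_dotProduct_mulVec_nonneg (by simpa [IsHermitian] using hsymm) fun x => ?_
  have hvec : x ᵥ* Lp = Lp *ᵥ x := by rw [← mulVec_transpose, hsymm]
  rw [star_trivial, ← h.2.1, ← mulVec_mulVec, ← mulVec_mulVec, dotProduct_mulVec, hvec]
  simpa using hL.dotProduct_mulVec_nonneg (Lp *ᵥ x)

theorem trace_mul_add_transpose_mul (h : IsMoorePenroseInv L Lp) (hL : Lᵀ = L)
    (hker : ∀ x : Fin n → ℝ, L *ᵥ x = 0 → ∃ c : ℝ, x = fun _ => c)
    {Y : Matrix (Fin n) (Fin n) ℝ} (hY : Y *ᵥ (fun _ => 1) = 0) :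
    (Lp * (L * Y + Yᵀ * L)).trace = 2 * Y.trace := by
  obtain ⟨h1, -, h3, -⟩ := h
  have hLLp : L * (1 - L * Lp) = 0 :=
    calc L * (1 - L * Lp) = ((1 - L * Lp) * L)ᵀ := by
          rw [transpose_mul, transpose_sub, transpose_one, h3, hL]
      _ = 0 := by rw [Matrix.sub_mul, Matrix.one_mul, h1, sub_self, transpose_zero]
  have hLpL : L * (1 - Lp * L) = 0 := by
    rw [Matrix.mul_sub, Matrix.mul_one, ← Matrix.mul_assoc, h1, sub_self]
  -- `1 - L⁺L` and `1 - LL⁺` have constant columns, which `Y` annihilates.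
  have hYLpL : Y * (Lp * L) = Y := by
    simpa [Matrix.mul_sub, sub_eq_zero, eq_comm] using mul_eq_zero_of_ker_le_const hker hLpL hY
  have hYLLp : Y * (L * Lp) = Y := by
    simpa [Matrix.mul_sub, sub_eq_zero, eq_comm] using mul_eq_zero_of_ker_le_const hker hLLp hY
  have e1 : (Lp * (L * Y)).trace = Y.trace := by
    rw [← Matrix.mul_assoc, trace_mul_cycle, Matrix.mul_assoc, hYLpL]
  have e2 : (Lp * (Yᵀ * L)).trace = Y.trace := by
    rw [← Matrix.mul_assoc, trace_mul_cycle, ← trace_transpose, transpose_mul, transpose_transpose,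
      h3, hYLLp]
  rw [Matrix.mul_add, trace_add, e1, e2, two_mul]

end IsMoorePenroseInv

section Gramian

open NormedSpace

variable {N : Type*} [Fintype N] [DecidableEq N]

theorem Matrix.continuous_exp_smul (A : Matrix N N ℝ) : Continuous fun t : ℝ => exp (t • A) := by
  open scoped Matrix.Norms.Operator in
  exact exp_continuous.comp (continuous_id.smul continuous_const)

-- Any matrix norm would do: it only supplies the Banach algebra structure used to integrate and
-- to differentiate `exp`.
open scoped Matrix.Norms.Operator

noncomputable def gramian (A Q : Matrix N N ℝ) (T : ℝ) : Matrix N N ℝ :=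
  ∫ t in (0 : ℝ)..T, (exp (t • A))ᵀ * Q * exp (t • A)

theorem hasDerivAt_transpose_exp_smul_mul_mul_exp_smul (A Q : Matrix N N ℝ) (t : ℝ) :
    HasDerivAt (fun s : ℝ => (exp (s • A))ᵀ * Q * exp (s • A))
      (Aᵀ * ((exp (t • A))ᵀ * Q * exp (t • A)) + (exp (t • A))ᵀ * Q * exp (t • A) * A) t := by
  simp_rw [← exp_transpose, transpose_smul]
  exact (((hasDerivAt_exp_smul_const' (𝕂 := ℝ) Aᵀ t).mul_const Q).mul
    (hasDerivAt_exp_smul_const (𝕂 := ℝ) A t)).congr_deriv (by simp only [Matrix.mul_assoc]; rfl)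

theorem continuous_transpose_exp_smul_mul_mul_exp_smul (A Q : Matrix N N ℝ) :
    Continuous fun s : ℝ => (exp (s • A))ᵀ * Q * exp (s • A) :=
  continuous_iff_continuousAt.2 fun t =>
    (hasDerivAt_transpose_exp_smul_mul_mul_exp_smul A Q t).continuousAt

theorem map_gramian {E : Type*} [NormedAddCommGroup E] [NormedSpace ℝ E] [FiniteDimensional ℝ E]
    (φ : Matrix N N ℝ →ₗ[ℝ] E) (A Q : Matrix N N ℝ) (T : ℝ) :
    φ (gramian A Q T) = ∫ t in (0 : ℝ)..T, φ ((exp (t • A))ᵀ * Q * exp (t • A)) :=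
  ((LinearMap.toContinuousLinearMap φ).intervalIntegral_comp_comm
    ((continuous_transpose_exp_smul_mul_mul_exp_smul A Q).intervalIntegrable _ _)).symm

theorem transpose_mul_gramian_add_gramian_mul (A Q : Matrix N N ℝ) (T : ℝ) :
    Aᵀ * gramian A Q T + gramian A Q T * A = (exp (T • A))ᵀ * Q * exp (T • A) - Q := by
  set F := fun s : ℝ => (exp (s • A))ᵀ * Q * exp (s • A)
  have hl : Continuous fun t => Aᵀ * F t :=
    continuous_const.mul (continuous_transpose_exp_smul_mul_mul_exp_smul A Q)
  have hr : Continuous fun t => F t * A :=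
    (continuous_transpose_exp_smul_mul_mul_exp_smul A Q).mul continuous_const
  have hftc := intervalIntegral.integral_eq_sub_of_hasDerivAt (a := 0) (b := T)
    (fun t _ => hasDerivAt_transpose_exp_smul_mul_mul_exp_smul A Q t)
    ((hl.add hr).intervalIntegrable _ _)
  have hL : ∫ t in (0 : ℝ)..T, Aᵀ * F t = Aᵀ * gramian A Q T :=
    (map_gramian (LinearMap.mulLeft ℝ Aᵀ) A Q T).symm
  have hR : ∫ t in (0 : ℝ)..T, F t * A = gramian A Q T * A :=
    (map_gramian (LinearMap.mulRight ℝ A) A Q T).symm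
  rw [intervalIntegral.integral_add (hl.intervalIntegrable _ _) (hr.intervalIntegrable _ _),
    hL, hR] at hftc
  simpa [F] using hftc

theorem transpose_gramian {A Q : Matrix N N ℝ} (hQ : Qᵀ = Q) (T : ℝ) :
    (gramian A Q T)ᵀ = gramian A Q T :=
  calc (gramian A Q T)ᵀ = ∫ t in (0 : ℝ)..T, ((exp (t • A))ᵀ * Q * exp (t • A))ᵀ :=
        map_gramian (transposeLinearEquiv N N ℝ ℝ).toLinearMap A Q T
    _ = gramian A Q T := by
        simp only [gramian, transpose_mul, transpose_transpose, hQ, Matrix.mul_assoc]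

theorem posSemidef_gramian {A Q : Matrix N N ℝ} (hQ : Q.PosSemidef) {T : ℝ} (hT : 0 ≤ T) :
    (gramian A Q T).PosSemidef := by
  refine .of_dotProduct_mulVec_nonneg ?_ fun x => ?_
  · simpa [IsHermitian] using transpose_gramian (isHermitian_iff_isSymm.1 hQ.isHermitian).eq T
  · have hx : star x ⬝ᵥ gramian A Q T *ᵥ x
        = ∫ t in (0 : ℝ)..T, star x ⬝ᵥ ((exp (t • A))ᵀ * Q * exp (t • A)) *ᵥ x :=
      map_gramian (dotProductBilin ℝ ℝ (star x) ∘ₗ (mulVecBilin ℝ ℝ).flip x) A Q T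
    rw [hx]
    exact intervalIntegral.integral_nonneg hT fun t _ =>
      (hQ.conjTranspose_mul_mul_same (exp (t • A))).dotProduct_mulVec_nonneg x

theorem exp_smul_mulVec_of_mulVec_eq_zero {A : Matrix N N ℝ} {v : N → ℝ} (hv : A *ᵥ v = 0)
    (t : ℝ) : exp (t • A) *ᵥ v = v := by
  let φ := ((mulVecBilin (m := N) ℝ ℝ).flip v).toContinuousLinearMap
  have hder : ∀ s : ℝ, HasDerivAt (fun u : ℝ => exp (u • A) *ᵥ v) 0 s := fun s => by
    refine (φ.hasFDerivAt.comp_hasDerivAt s (hasDerivAt_exp_smul_const (𝕂 := ℝ) A s)).congr_deriv ?_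
    show (exp (s • A) * A) *ᵥ v = 0
    rw [← mulVec_mulVec, hv, mulVec_zero]
  simpa using is_const_of_deriv_eq_zero (fun s => (hder s).differentiableAt)
    (fun s => (hder s).deriv) t 0

theorem gramian_mulVec_eq_zero {A Q : Matrix N N ℝ} {v : N → ℝ} (hA : A *ᵥ v = 0)
    (hQ : Q *ᵥ v = 0) (T : ℝ) : gramian A Q T *ᵥ v = 0 := by
  have hv : gramian A Q T *ᵥ v = ∫ t in (0 : ℝ)..T, ((exp (t • A))ᵀ * Q * exp (t • A)) *ᵥ v :=
    map_gramian ((mulVecBilin (m := N) ℝ ℝ).flip v) A Q T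
  simp [hv, ← mulVec_mulVec, exp_smul_mulVec_of_mulVec_eq_zero hA, hQ]

theorem intervalIntegral_trace_eq_trace_gramian {K M : Type*} [Fintype K] [Fintype M]
    (A : Matrix N N ℝ) (B : Matrix N K ℝ) (C : Matrix M N ℝ) (T : ℝ) :
    ∫ t in (0 : ℝ)..T, ((C * exp (t • A) * B)ᵀ * (C * exp (t • A) * B)).trace =
      (Bᵀ * gramian A (Cᵀ * C) T * B).trace := by
  rw [show (Bᵀ * gramian A (Cᵀ * C) T * B).trace = _ from map_gramian
    (traceLinearMap K ℝ ℝ ∘ₗ mulRightLinearMap K ℝ B ∘ₗ mulLeftLinearMap N ℝ Bᵀ) A (Cᵀ * C) T]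
  simp [transpose_mul, Matrix.mul_assoc]

end Gramian

theorem exists_tendsto_intervalIntegral_le {g : ℝ → ℝ} (hg : Continuous g) (hg0 : ∀ t, 0 ≤ g t)
    {c : ℝ} (hc : ∀ T, 0 ≤ T → ∫ t in (0 : ℝ)..T, g t ≤ c) :
    ∃ I, Tendsto (fun T => ∫ t in (0 : ℝ)..T, g t) atTop (𝓝 I) ∧ I ≤ c := by
  have hint : IntegrableOn g (Set.Ioi 0) :=
    integrableOn_Ioi_of_intervalIntegral_norm_bounded c 0 (fun _ => hg.integrableOn_Ioc) tendsto_id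
      ((eventually_ge_atTop 0).mono fun T hT => by
        simpa only [id, fun t => Real.norm_of_nonneg (hg0 t)] using hc T hT)
  have h := intervalIntegral_tendsto_integral_Ioi 0 hint tendsto_id
  exact ⟨_, h, le_of_tendsto h ((eventually_ge_atTop 0).mono hc)⟩

theorem convexOn_sum_div {ι : Type*} [Fintype ι] {q : ι → ℝ} (hq : ∀ i, 0 ≤ q i) :
    ConvexOn ℝ {x : ι → ℝ | ∀ i, 0 < x i} fun x => ∑ i, q i / x i := by
  have hinv : ConvexOn ℝ (Set.Ioi 0) fun t : ℝ => t⁻¹ := by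
    simpa using convexOn_zpow (𝕜 := ℝ) (-1)
  have hS : Convex ℝ {x : ι → ℝ | ∀ i, 0 < x i} := by
    simpa [Set.pi, Set.Ioi] using convex_pi (s := Set.univ) fun i _ => convex_Ioi (0 : ℝ)
  refine ⟨hS, fun x hx y hy a b ha hb hab => ?_⟩
  simp only [smul_eq_mul, Finset.mul_sum, ← Finset.sum_add_distrib]
  refine Finset.sum_le_sum fun i _ => ?_
  have := mul_le_mul_of_nonneg_left (hinv.2 (hx i) (hy i) ha hb hab) (hq i)
  simp only [Pi.add_apply, Pi.smul_apply, smul_eq_mul] at this ⊢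
  rw [div_eq_mul_inv, div_eq_mul_inv, div_eq_mul_inv]
  linarith

theorem sum_mul_le_iSup_div_iInf_mul_sum {ι : Type*} [Fintype ι] {π d x : ι → ℝ}
    (hπ : ∀ i, 0 ≤ π i) (hd : ∀ i, 0 < d i) (hx : ∀ i, 0 ≤ x i) :
    ∑ i, π i * x i ≤ (⨆ i, π i) / (⨅ i, d i) * ∑ i, d i * x i := by
  rw [Finset.mul_sum]
  refine Finset.sum_le_sum fun i _ => ?_
  have : Nonempty ι := ⟨i⟩
  have hδ : 0 < ⨅ i, d i := by
    obtain ⟨j, hj⟩ := exists_eq_ciInf_of_finite (f := d)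
    exact hj ▸ hd j
  have hπi : π i ≤ ⨆ i, π i := le_ciSup (Set.finite_range π).bddAbove i
  calc π i * x i ≤ (⨆ i, π i) * x i := mul_le_mul_of_nonneg_right hπi (hx i)
    _ = (⨆ i, π i) / (⨅ i, d i) * ((⨅ i, d i) * x i) := by field_simp
    _ ≤ (⨆ i, π i) / (⨅ i, d i) * (d i * x i) :=
      mul_le_mul_of_nonneg_left
        (mul_le_mul_of_nonneg_right (ciInf_le (Set.finite_range d).bddBelow i) (hx i))
        (div_nonneg ((hπ i).trans hπi) hδ.le)

section Swing

variable {n : ℕ} {m d : Fin n → ℝ} {L : Matrix (Fin n) (Fin n) ℝ}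

theorem swingA_mulVec_inl_one (hL : L *ᵥ (fun _ => 1) = 0) :
    swingA m d L *ᵥ Sum.elim (fun _ => 1) 0 = 0 := by
  simp [swingA, fromBlocks_mulVec, neg_mulVec, ← mulVec_mulVec, hL]

theorem toBlocks₁₁_swingA_transpose_mul_add_mul_swingA (hL : Lᵀ = L)
    {P : Matrix (Fin n ⊕ Fin n) (Fin n ⊕ Fin n) ℝ} (hP : Pᵀ = P) :
    ((swingA m d L)ᵀ * P + P * swingA m d L).toBlocks₁₁ =
      -(L * (diagonal (fun i => (m i)⁻¹) * P.toBlocks₂₁) +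
        (diagonal (fun i => (m i)⁻¹) * P.toBlocks₂₁)ᵀ * L) := by
  have h₁₂ : P.toBlocks₁₂ = P.toBlocks₂₁ᵀ := (congrArg toBlocks₁₂ hP).symm
  rw [← P.fromBlocks_toBlocks, h₁₂]
  simp only [swingA, diagonal_mul_diagonal, diagonal_neg, fromBlocks_transpose, transpose_zero,
    transpose_neg, transpose_mul, hL, diagonal_transpose, transpose_one, fromBlocks_multiply,
    zero_mul, neg_mul, Matrix.mul_assoc, zero_add, one_mul, mul_zero, mul_neg, mul_one,
    fromBlocks_add, toBlocks_fromBlocks₁₁, toBlocks_fromBlocks₂₁, neg_add_rev]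
  abel

theorem swingA_transpose_mul_add_mul_swingA_inr_inr
    {P : Matrix (Fin n ⊕ Fin n) (Fin n ⊕ Fin n) ℝ} (hP : Pᵀ = P) (i : Fin n) :
    ((swingA m d L)ᵀ * P + P * swingA m d L) (.inr i) (.inr i) =
      2 * (P (.inr i) (.inl i) - d i / m i * P (.inr i) (.inr i)) := by
  have hPi : P (.inl i) (.inr i) = P (.inr i) (.inl i) := congrFun (congrFun hP _) _
  simp only [swingA, diagonal_mul_diagonal, diagonal_neg, Matrix.add_apply, Matrix.mul_apply,
    transpose_apply, Fintype.sum_sum_type, fromBlocks_apply₁₂, one_apply, ite_mul, one_mul,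
    zero_mul, Finset.sum_ite_eq', Finset.mem_univ, ↓reduceIte, hPi, fromBlocks_apply₂₂,
    diagonal_apply, neg_mul, mul_ite, mul_one, mul_zero, mul_neg]
  ring

theorem trace_transpose_swingB_mul_mul_swingB {π : Fin n → ℝ} (hπ : ∀ i, 0 ≤ π i)
    (P : Matrix (Fin n ⊕ Fin n) (Fin n ⊕ Fin n) ℝ) :
    ((swingB m π)ᵀ * P * swingB m π).trace = ∑ j, π j * (P (.inr j) (.inr j) / m j ^ 2) := by
  rw [swingB, diagonal_mul_diagonal, trace_transpose_fromRows_zero_diagonal_mul_mul]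
  refine Finset.sum_congr rfl fun j _ => ?_
  rw [mul_pow, Real.sq_sqrt (hπ j)]
  ring

theorem damping_mul_le_of_lyapunov (hm : ∀ i, 0 < m i) {Q₁ : Matrix (Fin n) (Fin n) ℝ}
    {q₂ : Fin n → ℝ} {P G : Matrix (Fin n ⊕ Fin n) (Fin n ⊕ Fin n) ℝ} (hP : Pᵀ = P)
    (hG : G.PosSemidef)
    (hLyap : (swingA m d L)ᵀ * P + P * swingA m d L = G - fromBlocks Q₁ 0 0 (diagonal q₂))
    (j : Fin n) :
    d j * (P (.inr j) (.inr j) / m j ^ 2) ≤ (m j)⁻¹ * P (.inr j) (.inl j) + q₂ j / m j / 2 := by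
  have hj := congrFun (congrFun hLyap (.inr j)) (.inr j)
  rw [swingA_transpose_mul_add_mul_swingA_inr_inr hP] at hj
  simp only [Matrix.sub_apply, fromBlocks_apply₂₂, diagonal_apply_eq] at hj
  have hGj : 0 ≤ (m j)⁻¹ * G (.inr j) (.inr j) :=
    mul_nonneg (inv_nonneg.2 (hm j).le) hG.diag_nonneg
  have : d j * (P (.inr j) (.inr j) / m j ^ 2) =
      (m j)⁻¹ * P (.inr j) (.inl j) + q₂ j / m j / 2 - (m j)⁻¹ * G (.inr j) (.inr j) / 2 := by
    linear_combination (-(m j)⁻¹ / 2) * hj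
  linarith

theorem two_mul_trace_le_of_lyapunov (hL : L.PosSemidef)
    (hker : ∀ x : Fin n → ℝ, L *ᵥ x = 0 → ∃ c : ℝ, x = fun _ => c)
    {Lp : Matrix (Fin n) (Fin n) ℝ} (hLp : IsMoorePenroseInv L Lp)
    {Q₁ : Matrix (Fin n) (Fin n) ℝ} {q₂ : Fin n → ℝ}
    {P G : Matrix (Fin n ⊕ Fin n) (Fin n ⊕ Fin n) ℝ} (hP : Pᵀ = P) (hG : G.PosSemidef)
    (hLyap : (swingA m d L)ᵀ * P + P * swingA m d L = G - fromBlocks Q₁ 0 0 (diagonal q₂))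
    (hPv : P *ᵥ Sum.elim (fun _ => 1) 0 = 0) :
    2 * (diagonal (fun i => (m i)⁻¹) * P.toBlocks₂₁).trace ≤ (Lp * Q₁).trace := by
  have hLsymm : Lᵀ = L := (isHermitian_iff_isSymm.1 hL.isHermitian).eq
  set Y := diagonal (fun i => (m i)⁻¹) * P.toBlocks₂₁
  have hY1 : Y *ᵥ (fun _ => 1) = 0 := by
    have : P.toBlocks₂₁ *ᵥ (fun _ => 1) = 0 := funext fun k => by
      simpa [mulVec, dotProduct, Fintype.sum_sum_type, toBlocks₂₁] using congrFun hPv (.inr k)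
    rw [← mulVec_mulVec, this, mulVec_zero]
  have hLY : L * Y + Yᵀ * L = Q₁ - G.toBlocks₁₁ := by
    have h := congrArg toBlocks₁₁ hLyap
    have hblock : (G - fromBlocks Q₁ 0 0 (diagonal q₂)).toBlocks₁₁ = G.toBlocks₁₁ - Q₁ := rfl
    rw [toBlocks₁₁_swingA_transpose_mul_add_mul_swingA hLsymm hP, hblock] at h
    rw [← neg_sub, ← h, neg_neg]
  have htr := hLp.trace_mul_add_transpose_mul hLsymm hker hY1
  rw [hLY, Matrix.mul_sub, trace_sub] at htr
  have hG₁₁ : 0 ≤ (Lp * G.toBlocks₁₁).trace :=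
    (hLp.posSemidef hL).trace_mul_nonneg (hG.submatrix Sum.inl)
  linarith

theorem sum_damping_mul_le_of_lyapunov (hm : ∀ i, 0 < m i) (hL : L.PosSemidef)
    (hker : ∀ x : Fin n → ℝ, L *ᵥ x = 0 → ∃ c : ℝ, x = fun _ => c)
    {Lp : Matrix (Fin n) (Fin n) ℝ} (hLp : IsMoorePenroseInv L Lp)
    {Q₁ : Matrix (Fin n) (Fin n) ℝ} {q₂ : Fin n → ℝ}
    {P G : Matrix (Fin n ⊕ Fin n) (Fin n ⊕ Fin n) ℝ} (hP : Pᵀ = P) (hG : G.PosSemidef)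
    (hLyap : (swingA m d L)ᵀ * P + P * swingA m d L = G - fromBlocks Q₁ 0 0 (diagonal q₂))
    (hPv : P *ᵥ Sum.elim (fun _ => 1) 0 = 0) :
    ∑ j, d j * (P (.inr j) (.inr j) / m j ^ 2) ≤ ((Lp * Q₁).trace + ∑ j, q₂ j / m j) / 2 := by
  have htr := two_mul_trace_le_of_lyapunov hL hker hLp hP hG hLyap hPv
  calc ∑ j, d j * (P (.inr j) (.inr j) / m j ^ 2)
      ≤ ∑ j, ((m j)⁻¹ * P (.inr j) (.inl j) + q₂ j / m j / 2) :=
        Finset.sum_le_sum fun j _ => damping_mul_le_of_lyapunov hm hP hG hLyap j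
    _ = (diagonal (fun i => (m i)⁻¹) * P.toBlocks₂₁).trace + (∑ j, q₂ j / m j) / 2 := by
      simp [Finset.sum_add_distrib, Finset.sum_div, trace, toBlocks₂₁]
    _ ≤ ((Lp * Q₁).trace + ∑ j, q₂ j / m j) / 2 := by linarith

theorem intervalIntegral_trace_swing_output_le {p : ℕ} {π : Fin n → ℝ} (hm : ∀ i, 0 < m i)
    (hd : ∀ i, 0 < d i) (hπ : ∀ i, 0 ≤ π i) (hL : L.PosSemidef)
    (hker : ∀ x : Fin n → ℝ, L *ᵥ x = 0 ↔ ∃ c : ℝ, x = fun _ => c)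
    {Lp : Matrix (Fin n) (Fin n) ℝ} (hLp : IsMoorePenroseInv L Lp)
    {Q₁ : Matrix (Fin n) (Fin n) ℝ} (hQ₁1 : Q₁ *ᵥ (fun _ => 1) = 0) {q₂ : Fin n → ℝ}
    {C : Matrix (Fin p) (Fin n ⊕ Fin n) ℝ} (hC : Cᵀ * C = fromBlocks Q₁ 0 0 (diagonal q₂))
    {T : ℝ} (hT : 0 ≤ T) :
    ∫ t in (0 : ℝ)..T, ((C * NormedSpace.exp (t • swingA m d L) * swingB m π)ᵀ *
        (C * NormedSpace.exp (t • swingA m d L) * swingB m π)).trace ≤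
      (⨆ i, π i) * (1 / (2 * ⨅ i, d i)) * ((Lp * Q₁).trace + ∑ i, q₂ i / m i) := by
  set A := swingA m d L
  set Q := fromBlocks Q₁ 0 0 (diagonal q₂)
  have hQ : Q.PosSemidef := hC ▸ by simpa using posSemidef_conjTranspose_mul_self C
  have hQv : Q *ᵥ Sum.elim (fun _ => 1) 0 = 0 := by simp [Q, fromBlocks_mulVec, hQ₁1]
  have hAv : A *ᵥ Sum.elim (fun _ => 1) 0 = 0 := swingA_mulVec_inl_one ((hker _).2 ⟨1, rfl⟩)
  set P := gramian A Q T
  have hdamp := sum_damping_mul_le_of_lyapunov hm hL (fun x => (hker x).1) hLp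
    (transpose_gramian (isHermitian_iff_isSymm.1 hQ.isHermitian).eq T)
    (by simpa using hQ.conjTranspose_mul_mul_same (NormedSpace.exp (T • A)))
    (transpose_mul_gramian_add_gramian_mul A Q T) (gramian_mulVec_eq_zero hAv hQv T)
  have hπ₀ : 0 ≤ ⨆ i, π i := Real.iSup_nonneg hπ
  have hd₀ : 0 ≤ ⨅ i, d i := Real.iInf_nonneg fun i => (hd i).le
  rw [intervalIntegral_trace_eq_trace_gramian, hC, trace_transpose_swingB_mul_mul_swingB hπ]
  calc ∑ j, π j * (P (.inr j) (.inr j) / m j ^ 2)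
      ≤ (⨆ i, π i) / (⨅ i, d i) * ∑ j, d j * (P (.inr j) (.inr j) / m j ^ 2) :=
        sum_mul_le_iSup_div_iInf_mul_sum hπ hd fun j =>
          div_nonneg (posSemidef_gramian hQ hT).diag_nonneg (sq_nonneg _)
    _ ≤ (⨆ i, π i) / (⨅ i, d i) * (((Lp * Q₁).trace + ∑ j, q₂ j / m j) / 2) :=
        mul_le_mul_of_nonneg_left hdamp (by positivity)
    _ = _ := by ring

end Swing

theorem convex_upper_bound_generic_metric_general {n p : ℕ}
    (m d π : Fin n → ℝ) (hm : ∀ i, 0 < m i) (hd : ∀ i, 0 < d i) (hπ : ∀ i, 0 ≤ π i)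
    (L : Matrix (Fin n) (Fin n) ℝ) (hLpsd : L.PosSemidef)
    (hker : ∀ x : Fin n → ℝ, L.mulVec x = 0 ↔ ∃ c : ℝ, x = fun _ => c)
    (Lp : Matrix (Fin n) (Fin n) ℝ) (hLp : IsMoorePenroseInv L Lp)
    (Q₁ : Matrix (Fin n) (Fin n) ℝ)
    (hQ₁1 : Q₁.mulVec (fun _ => (1 : ℝ)) = 0)
    (q₂ : Fin n → ℝ) (hq₂ : ∀ i, 0 ≤ q₂ i)
    (C : Matrix (Fin p) (Fin n ⊕ Fin n) ℝ)
    (hC : Cᵀ * C = Matrix.fromBlocks Q₁ 0 0 (Matrix.diagonal q₂)) :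
    (∀ T : ℝ, 0 ≤ T →
      (∫ t in (0:ℝ)..T,
          Matrix.trace ((C * NormedSpace.exp (t • swingA m d L) * swingB m π)ᵀ *
            (C * NormedSpace.exp (t • swingA m d L) * swingB m π))) ≤
        (⨆ i, π i) * (1 / (2 * ⨅ i, d i)) *
          (Matrix.trace (Lp * Q₁) + ∑ i, q₂ i / m i)) ∧
    (∃ I : ℝ,
      Tendsto
        (fun T : ℝ => ∫ t in (0:ℝ)..T,
          Matrix.trace ((C * NormedSpace.exp (t • swingA m d L) * swingB m π)ᵀ *
            (C * NormedSpace.exp (t • swingA m d L) * swingB m π)))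
        atTop (nhds I) ∧
      I ≤ (⨆ i, π i) * (1 / (2 * ⨅ i, d i)) *
          (Matrix.trace (Lp * Q₁) + ∑ i, q₂ i / m i)) ∧
    ConvexOn ℝ {m' : Fin n → ℝ | ∀ i, 0 < m' i}
      (fun m' => (⨆ i, π i) * (1 / (2 * ⨅ i, d i)) *
        (Matrix.trace (Lp * Q₁) + ∑ i, q₂ i / m' i)) := by
  have hbound := fun T (hT : 0 ≤ T) =>
    intervalIntegral_trace_swing_output_le (π := π) hm hd hπ hLpsd hker hLp hQ₁1 hC hT
  refine ⟨hbound, exists_tendsto_intervalIntegral_le ?_ (fun t => ?_) hbound, ?_⟩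
  · have := continuous_exp_smul (swingA m d L)
    fun_prop
  · simpa only [conjTranspose_eq_transpose_of_trivial] using (posSemidef_conjTranspose_mul_self
      (C * NormedSpace.exp (t • swingA m d L) * swingB m π)).trace_nonneg
  · have hπ₀ : 0 ≤ ⨆ i, π i := Real.iSup_nonneg hπ
    have hd₀ : 0 ≤ ⨅ i, d i := Real.iInf_nonneg fun i => (hd i).le
    exact (((convexOn_sum_div hq₂).add_const (Lp * Q₁).trace).smul
      (c := (⨆ i, π i) * (1 / (2 * ⨅ i, d i))) (by positivity)).congr fun x _ => by
      simp only [Pi.add_apply, smul_eq_mul]; ring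

/-- **Convex upper bound for generic performance metrics** (Remark 1): for any output matrix
`C` with `CᵀC = blkdiag(Q₁, diag(q₂))`, every finite-horizon energy is bounded by
`(maxᵢ πᵢ) · (1/(2 minᵢ dᵢ)) · (trace(L⁺Q₁) + Σᵢ (q₂)ᵢ/mᵢ)`; in particular the improper
integral converges and obeys the same bound, which is a convex function of the inertia
vector `m`. -/
theorem convex_upper_bound_generic_metric {n p : ℕ} (hn : 0 < n)
    (m d π : Fin n → ℝ) (hm : ∀ i, 0 < m i) (hd : ∀ i, 0 < d i) (hπ : ∀ i, 0 ≤ π i)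
    (L : Matrix (Fin n) (Fin n) ℝ) (hLpsd : L.PosSemidef)
    (hker : ∀ x : Fin n → ℝ, L.mulVec x = 0 ↔ ∃ c : ℝ, x = fun _ => c)
    (Lp : Matrix (Fin n) (Fin n) ℝ) (hLp : IsMoorePenroseInv L Lp)
    (Q₁ : Matrix (Fin n) (Fin n) ℝ) (hQ₁ : Q₁.PosSemidef)
    (hQ₁1 : Q₁.mulVec (fun _ => (1 : ℝ)) = 0)
    (q₂ : Fin n → ℝ) (hq₂ : ∀ i, 0 ≤ q₂ i)
    (C : Matrix (Fin p) (Fin n ⊕ Fin n) ℝ)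
    (hC : Cᵀ * C = Matrix.fromBlocks Q₁ 0 0 (Matrix.diagonal q₂)) :
    (∀ T : ℝ, 0 ≤ T →
      (∫ t in (0:ℝ)..T,
          Matrix.trace ((C * NormedSpace.exp (t • swingA m d L) * swingB m π)ᵀ *
            (C * NormedSpace.exp (t • swingA m d L) * swingB m π))) ≤
        (⨆ i, π i) * (1 / (2 * ⨅ i, d i)) *
          (Matrix.trace (Lp * Q₁) + ∑ i, q₂ i / m i)) ∧
    (∃ I : ℝ,
      Tendsto
        (fun T : ℝ => ∫ t in (0:ℝ)..T,
          Matrix.trace ((C * NormedSpace.exp (t • swingA m d L) * swingB m π)ᵀ *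
            (C * NormedSpace.exp (t • swingA m d L) * swingB m π)))
        atTop (nhds I) ∧
      I ≤ (⨆ i, π i) * (1 / (2 * ⨅ i, d i)) *
          (Matrix.trace (Lp * Q₁) + ∑ i, q₂ i / m i)) ∧
    ConvexOn ℝ {m' : Fin n → ℝ | ∀ i, 0 < m' i}
      (fun m' => (⨆ i, π i) * (1 / (2 * ⨅ i, d i)) *
        (Matrix.trace (Lp * Q₁) + ∑ i, q₂ i / m' i)) :=
  convex_upper_bound_generic_metric_general m d π hm hd hπ L hLpsd hker Lp hLp Q₁ hQ₁1 q₂ hq₂ C hC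
end
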